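/- Let τ_G(x) = e^{-x} and let ν_Λ be the Gumbel law with density Λ'(x) = e^{-x}exp(-e^{-x}). Then for every C^1 function f with compact support, ∫_ℝ [ -f'(x) + ∫_0^∞ f'(x+y)e^{-(x+y)} dy ] ν_Λ(dx) = 0; i.e. the generator A f(x) = -f'(x) + ∫_0^∞ f'(x+y)τ_G(x+y)dy satisfies ∫ A f dν_Λ = 0 (ν_Λ is an invariant measure for A). -/

import Mathlib

open Filter Topology MeasureTheory Set Real

/-! Put `g u = f' u * e^{-u}` and `G x = ∫_{u > x} g u`; the substitution `u = x + y` turns the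
inner integral into `G x`. The Gumbel distribution function `Λ x = exp (-e^{-x})` satisfies
`Λ' = ρ` (the density) and `Λ x * e^{-x} = ρ x`, so the integrand `ρ (-f' + G)` equals
`ρ G - Λ g = (Λ G)'`. As `Λ G → 0` at `-∞` (`Λ → 0`, `G` bounded) and at `+∞` (`Λ ≤ 1`,
`G → 0`), the integral of this derivative vanishes. -/

section TailIntegral

variable {E : Type*} [NormedAddCommGroup E] [NormedSpace ℝ E]

theorem setIntegral_Ioi_zero_comp_add_left (g : ℝ → E) (x : ℝ) :
    ∫ y in Ioi (0 : ℝ), g (x + y) = ∫ u in Ioi x, g u := by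
  have h := (measurePreserving_add_left (volume : Measure ℝ) x).setIntegral_preimage_emb
    (MeasurableEquiv.addLeft x).measurableEmbedding g (Ioi x)
  rwa [show (x + ·) ⁻¹' Ioi x = Ioi 0 by ext; simp] at h

theorem norm_setIntegral_Ioi_le {g : ℝ → E} (hg : Integrable g) (x : ℝ) :
    ‖∫ u in Ioi x, g u‖ ≤ ∫ u, ‖g u‖ :=
  (norm_integral_le_integral_norm _).trans <|
    setIntegral_le_integral hg.norm (Eventually.of_forall fun _ => norm_nonneg _)

theorem hasDerivAt_setIntegral_Ioi [CompleteSpace E] {g : ℝ → E} (hg : Continuous g)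
    (hgi : Integrable g) (x : ℝ) :
    HasDerivAt (fun t => ∫ u in Ioi t, g u) (-g x) x := by
  have h : (fun t => ∫ u in Ioi t, g u) = fun t => (∫ u in Ioi 0, g u) - ∫ u in 0..t, g u := by
    ext t
    rw [← intervalIntegral.integral_Ioi_sub_Ioi' hgi.integrableOn hgi.integrableOn, sub_sub_cancel]
  rw [h, ← zero_sub]
  exact (hasDerivAt_const x _).sub (hg.integral_hasStrictDerivAt 0 x).hasDerivAt

theorem integral_smul_integral_Ioi_sub_smul_eq_zero [CompleteSpace E] {Λ ρ : ℝ → ℝ}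
    {g : ℝ → E} {B : ℝ} (hΛ : ∀ x, HasDerivAt Λ (ρ x) x) (hρ : Integrable ρ)
    (hΛB : ∀ x, ‖Λ x‖ ≤ B) (hΛ_bot : Tendsto Λ atBot (𝓝 0)) (hg : Continuous g)
    (hgi : Integrable g) :
    ∫ x, (ρ x • ∫ u in Ioi x, g u) - Λ x • g x = 0 := by
  set G : ℝ → E := fun t => ∫ u in Ioi t, g u
  have hG : ∀ x, HasDerivAt G (-g x) x := hasDerivAt_setIntegral_Ioi hg hgi
  have hGB : ∀ x, ‖G x‖ ≤ ∫ u, ‖g u‖ := norm_setIntegral_Ioi_le hgi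
  have hGc : Continuous G := continuous_iff_continuousAt.2 fun x => (hG x).continuousAt
  have hΛc : Continuous Λ := continuous_iff_continuousAt.2 fun x => (hΛ x).continuousAt
  have hderiv : ∀ x, HasDerivAt (fun t => Λ t • G t) (ρ x • G x - Λ x • g x) x := fun x => by
    have h := (hΛ x).smul (hG x)
    rwa [smul_neg, neg_add_eq_sub] at h
  have hint : Integrable fun x => ρ x • G x - Λ x • g x :=
    (hρ.smul_bdd _ hGc.aestronglyMeasurable (Eventually.of_forall hGB)).sub
      (hgi.bdd_smul B hΛc.aestronglyMeasurable (Eventually.of_forall hΛB))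
  have hbot : Tendsto (fun t => Λ t • G t) atBot (𝓝 0) :=
    hΛ_bot.zero_smul_isBoundedUnder_le ⟨_, eventually_map.2 (Eventually.of_forall hGB)⟩
  have htop : Tendsto (fun t => Λ t • G t) atTop (𝓝 0) :=
    IsBoundedUnder.smul_tendsto_zero ⟨B, eventually_map.2 (Eventually.of_forall hΛB)⟩
      (tendsto_integral_Ioi_zero tendsto_id)
  simpa using integral_of_hasDerivAt_of_tendsto hderiv hint hbot htop

end TailIntegral

theorem integrable_deriv_of_nonneg {g g' : ℝ → ℝ} {l m : ℝ}
    (hderiv : ∀ x, HasDerivAt g (g' x) x) (hg'_nonneg : ∀ x, 0 ≤ g' x)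
    (hbot : Tendsto g atBot (𝓝 l)) (htop : Tendsto g atTop (𝓝 m)) : Integrable g' := by
  have hgc : Continuous g := continuous_iff_continuousAt.2 fun x => (hderiv x).continuousAt
  have hIoc : ∀ a b, IntegrableOn g' (Ioc a b) := fun a b =>
    intervalIntegral.integrableOn_deriv_of_nonneg hgc.continuousOn (fun x _ => hderiv x)
      fun x _ => hg'_nonneg x
  refine integrable_of_intervalIntegral_norm_tendsto (m - l) (fun i => hIoc (-i) i)
    tendsto_neg_atTop_atBot tendsto_id
    (Tendsto.congr' ?_ (htop.sub (hbot.comp tendsto_neg_atTop_atBot)))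
  filter_upwards [eventually_ge_atTop 0] with i hi
  have hle : -i ≤ i := by linarith
  simp only [norm_of_nonneg (hg'_nonneg _), Function.comp_apply]
  rw [intervalIntegral.integral_eq_sub_of_hasDerivAt (fun x _ => hderiv x)
    ((intervalIntegrable_iff_integrableOn_Ioc_of_le hle).2 (hIoc _ _))]

theorem hasDerivAt_exp_neg_exp_neg (x : ℝ) :
    HasDerivAt (fun t => exp (-exp (-t))) (exp (-x) * exp (-exp (-x))) x := by
  have h := ((hasDerivAt_neg x).exp.neg).exp
  simpa [mul_comm] using h

theorem tendsto_exp_neg_exp_neg_atBot : Tendsto (fun t => exp (-exp (-t))) atBot (𝓝 0) :=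
  tendsto_exp_atBot.comp <| tendsto_neg_atTop_atBot.comp <|
    tendsto_exp_atTop.comp tendsto_neg_atBot_atTop

theorem tendsto_exp_neg_exp_neg_atTop : Tendsto (fun t => exp (-exp (-t))) atTop (𝓝 1) := by
  have h : Tendsto (fun t => -exp (-t)) atTop (𝓝 0) := by
    simpa using (tendsto_exp_atBot.comp tendsto_neg_atTop_atBot).neg
  rw [← exp_zero]
  exact (continuous_exp.tendsto 0).comp h

theorem integrable_exp_neg_mul_exp_neg_exp_neg :
    Integrable fun x => exp (-x) * exp (-exp (-x)) :=
  integrable_deriv_of_nonneg hasDerivAt_exp_neg_exp_neg (fun _ => by positivity)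
    tendsto_exp_neg_exp_neg_atBot tendsto_exp_neg_exp_neg_atTop

/-- The Gumbel law `ν_Λ` (density `e^{-x} exp(-e^{-x})`) is invariant for the
generator `A f(x) = -f'(x) + ∫_0^∞ f'(x+y) e^{-(x+y)} dy`: for every `C¹`
function `f` with compact support, `∫ A f dν_Λ = 0`. -/
theorem gumbel_invariant_generator
    (f : ℝ → ℝ) (hf : ContDiff ℝ 1 f) (hsupp : HasCompactSupport f) :
    ∫ x, (-(deriv f x) + ∫ y in Ioi (0 : ℝ), deriv f (x + y) * Real.exp (-(x + y)))
        ∂(volume.withDensity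
          (fun x : ℝ => ENNReal.ofReal (Real.exp (-x) * Real.exp (-Real.exp (-x)))))
      = 0 := by
  set g : ℝ → ℝ := fun u => deriv f u * exp (-u)
  have hg : Continuous g := (hf.continuous_deriv le_rfl).mul (by fun_prop)
  have hgi : Integrable g := hg.integrable_of_hasCompactSupport hsupp.deriv.mul_right
  rw [integral_withDensity_eq_integral_toReal_smul (by fun_prop)
    (Eventually.of_forall fun _ => ENNReal.ofReal_lt_top)]
  refine (integral_congr_ae (Eventually.of_forall fun x => ?_)).trans
    (integral_smul_integral_Ioi_sub_smul_eq_zero (B := 1) hasDerivAt_exp_neg_exp_neg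
      integrable_exp_neg_mul_exp_neg_exp_neg (fun x => ?_) tendsto_exp_neg_exp_neg_atBot hg hgi)
  · rw [← setIntegral_Ioi_zero_comp_add_left g x,
      ENNReal.toReal_ofReal (by positivity), smul_eq_mul, smul_eq_mul, smul_eq_mul]
    ring
  · rw [norm_of_nonneg (exp_pos _).le, exp_le_one_iff, neg_nonpos]
    exact (exp_pos _).le
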